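/- In the GLM risk setup with Σ = E[xxᵀ] positive definite and θ* ≠ 0: for every D with 0 < D < ‖θ*‖₂ and every θ ∈ ℝ^p with ‖θ‖₂ ≤ D, the risk gradient satisfies ‖∇R(θ)‖₂ ≥ (Φ''(L_x‖θ*‖₂)·λ_min(Σ)/2)·(‖θ*‖₂ − D) > 0. -/

import Mathlib

open MeasureTheory
open scoped RealInnerProductSpace

/-!
Differentiating under the integral sign gives
`∇R(θ) = E[(Φ'(⟨x, θ⟩) - Φ'(⟨x, θ*⟩)) x]`. Since `Φ''` is even and non-increasing on `[0, ∞)`,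
`Φ'' ≥ Φ''(L_x ‖θ*‖)` on `[-L_x ‖θ*‖, L_x ‖θ*‖]`, which contains `⟨x, θ⟩` and `⟨x, θ*⟩`; so `Φ'` is
strongly monotone there and `⟨∇R(θ), θ - θ*⟩ ≥ Φ''(L_x ‖θ*‖) λ_min ‖θ - θ*‖²`. Cauchy–Schwarz and
`‖θ - θ*‖ ≥ ‖θ*‖ - D` conclude.
-/

lemma AntitoneOn.apply_le_of_abs_le {g : ℝ → ℝ} (hanti : AntitoneOn g (Set.Ici 0))
    (heven : ∀ t, g (-t) = g t) {M ξ : ℝ} (hξ : |ξ| ≤ M) : g M ≤ g ξ := by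
  calc g M ≤ g |ξ| := hanti (abs_nonneg ξ) ((abs_nonneg ξ).trans hξ) hξ
    _ = g ξ := by rcases abs_cases ξ with ⟨h, _⟩ | ⟨h, _⟩ <;> simp [h, heven]

lemma mul_sq_le_sub_mul_sub_of_le_deriv {f : ℝ → ℝ} (hf : Differentiable ℝ f) {c M a b : ℝ}
    (hc : ∀ ξ, |ξ| ≤ M → c ≤ deriv f ξ) (ha : |a| ≤ M) (hb : |b| ≤ M) :
    c * (a - b) ^ 2 ≤ (f a - f b) * (a - b) := by
  have hmono : MonotoneOn (fun t => f t - c * t) (Set.Icc (-M) M) := by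
    have hg : Differentiable ℝ (fun t => f t - c * t) := hf.sub (by fun_prop)
    refine monotoneOn_of_deriv_nonneg (convex_Icc _ _) hg.continuous.continuousOn
      hg.differentiableOn fun ξ hξ => ?_
    rw [interior_Icc] at hξ
    have hderiv : deriv (fun t => f t - c * t) ξ = deriv f ξ - c := by
      have h : HasDerivAt (fun t => f t - c * t) (deriv f ξ - c * 1) ξ :=
        (hf ξ).hasDerivAt.sub ((hasDerivAt_id ξ).const_mul c)
      rw [h.deriv, mul_one]
    rw [hderiv, sub_nonneg]
    exact hc ξ (abs_le.mpr ⟨hξ.1.le, hξ.2.le⟩)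
  rcases le_total a b with hab | hab
  · have := hmono (abs_le.mp ha) (abs_le.mp hb) hab
    nlinarith [mul_nonneg (sub_nonneg.mpr hab) (sub_nonneg.mpr this)]
  · have := hmono (abs_le.mp hb) (abs_le.mp ha) hab
    nlinarith [mul_nonneg (sub_nonneg.mpr hab) (sub_nonneg.mpr this)]

section InnerProductSpace

variable {E : Type*} [NormedAddCommGroup E] [InnerProductSpace ℝ E]

lemma mul_norm_le_norm_of_mul_sq_le_inner {g v : E} {c : ℝ} (h : c * ‖v‖ ^ 2 ≤ ⟪g, v⟫) :
    c * ‖v‖ ≤ ‖g‖ := by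
  rcases (norm_nonneg v).eq_or_lt with hv | hv
  · rw [← hv, mul_zero]
    exact norm_nonneg g
  · refine le_of_mul_le_mul_right ?_ hv
    nlinarith [real_inner_le_norm g v]

lemma hasGradientAt_comp_inner_sub_mul_inner [CompleteSpace E] {Φ : ℝ → ℝ} (v : E) (a : ℝ)
    {θ : E} (hΦ : DifferentiableAt ℝ Φ ⟪v, θ⟫) :
    HasGradientAt (fun θ => Φ ⟪v, θ⟫ - a * ⟪v, θ⟫) ((deriv Φ ⟪v, θ⟫ - a) • v) θ := by
  rw [hasGradientAt_iff_hasFDerivAt]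
  have hinner : HasFDerivAt (fun θ : E => ⟪v, θ⟫) (innerSL ℝ v) θ := (innerSL ℝ v).hasFDerivAt
  refine ((hΦ.hasDerivAt.comp_hasFDerivAt θ hinner).sub (hinner.const_mul a)).congr_fderiv ?_
  ext w
  simp [sub_mul]

end InnerProductSpace

noncomputable def glmRisk {Ω E : Type*} [MeasurableSpace Ω] [NormedAddCommGroup E]
    [InnerProductSpace ℝ E] (μ : Measure Ω) (x : Ω → E) (Φ : ℝ → ℝ) (θstar θ : E) : ℝ :=
  ∫ ω, (Φ ⟪x ω, θ⟫ - deriv Φ ⟪x ω, θstar⟫ * ⟪x ω, θ⟫) ∂μ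

section Integral

variable {Ω E : Type*} [MeasurableSpace Ω] {μ : Measure Ω} [NormedAddCommGroup E]
  [InnerProductSpace ℝ E] {x : Ω → E} {Lx : ℝ} {Φ : ℝ → ℝ} {K : ℝ}

lemma ae_abs_inner_le (hxbd : ∀ᵐ ω ∂μ, ‖x ω‖ ≤ Lx) (θ : E) :
    ∀ᵐ ω ∂μ, |⟪x ω, θ⟫| ≤ Lx * ‖θ‖ := by
  filter_upwards [hxbd] with ω hω
  exact (abs_real_inner_le_norm _ _).trans (mul_le_mul_of_nonneg_right hω (norm_nonneg θ))

lemma norm_deriv_sub_deriv_smul_le (hΦ' : ∀ t, |deriv Φ t| ≤ K) (s t : ℝ) (v : E) :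
    ‖(deriv Φ s - deriv Φ t) • v‖ ≤ 2 * K * ‖v‖ := by
  rw [norm_smul, Real.norm_eq_abs]
  gcongr
  linarith [abs_sub (deriv Φ s) (deriv Φ t), hΦ' s, hΦ' t]

lemma aestronglyMeasurable_deriv_comp_inner (hx : AEStronglyMeasurable x μ) (θ : E) :
    AEStronglyMeasurable (fun ω => deriv Φ ⟪x ω, θ⟫) μ :=
  ((measurable_deriv Φ).comp_aemeasurable
    (hx.inner aestronglyMeasurable_const).aemeasurable).aestronglyMeasurable

variable [IsFiniteMeasure μ]

lemma integrable_deriv_sub_deriv_smul (hx : AEStronglyMeasurable x μ)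
    (hxbd : ∀ᵐ ω ∂μ, ‖x ω‖ ≤ Lx) (hΦ' : ∀ t, |deriv Φ t| ≤ K) (θstar θ : E) :
    Integrable (fun ω => (deriv Φ ⟪x ω, θ⟫ - deriv Φ ⟪x ω, θstar⟫) • x ω) μ := by
  refine Integrable.of_bound (((aestronglyMeasurable_deriv_comp_inner hx θ).sub
    (aestronglyMeasurable_deriv_comp_inner hx θstar)).smul hx) (2 * K * Lx) ?_
  filter_upwards [hxbd] with ω hω
  have hK : 0 ≤ K := (abs_nonneg _).trans (hΦ' 0)
  exact (norm_deriv_sub_deriv_smul_le hΦ' _ _ _).trans (by gcongr)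

variable [CompleteSpace E]

lemma hasGradientAt_integral_of_dominated {F : E → Ω → ℝ} {G : E → Ω → E} {θ : E} (C : ℝ)
    (hF_meas : ∀ θ, AEStronglyMeasurable (F θ) μ) (hF_int : Integrable (F θ) μ)
    (hG_meas : AEStronglyMeasurable (G θ) μ) (hG_le : ∀ᵐ ω ∂μ, ∀ θ, ‖G θ ω‖ ≤ C)
    (hG : ∀ ω θ, HasGradientAt (F · ω) (G θ ω) θ) :
    HasGradientAt (fun θ => ∫ ω, F θ ω ∂μ) (∫ ω, G θ ω ∂μ) θ := by
  let T := (InnerProductSpace.toDual ℝ E).toLinearIsometry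
  have hT : InnerProductSpace.toDual ℝ E (∫ ω, G θ ω ∂μ) = ∫ ω, T (G θ ω) ∂μ :=
    (T.integral_comp_comm _).symm
  rw [hasGradientAt_iff_hasFDerivAt, hT]
  refine hasFDerivAt_integral_of_dominated_of_fderiv_le (bound := fun _ => C) Filter.univ_mem
    (.of_forall hF_meas) hF_int (T.continuous.comp_aestronglyMeasurable hG_meas) ?_
    (integrable_const C) (.of_forall fun ω θ _ => hasGradientAt_iff_hasFDerivAt.mp (hG ω θ))
  filter_upwards [hG_le] with ω hω θ _
  simpa [T] using hω θ

lemma hasGradientAt_glmRisk (hx : AEStronglyMeasurable x μ) (hxbd : ∀ᵐ ω ∂μ, ‖x ω‖ ≤ Lx)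
    (hΦ : Differentiable ℝ Φ) (hΦ' : ∀ t, |deriv Φ t| ≤ K) (θstar θ : E) :
    HasGradientAt (glmRisk μ x Φ θstar)
      (∫ ω, (deriv Φ ⟪x ω, θ⟫ - deriv Φ ⟪x ω, θstar⟫) • x ω ∂μ) θ := by
  have hinner : ∀ θ : E, AEStronglyMeasurable (fun ω => ⟪x ω, θ⟫) μ := fun θ =>
    hx.inner aestronglyMeasurable_const
  have hF_meas : ∀ θ : E,
      AEStronglyMeasurable (fun ω => Φ ⟪x ω, θ⟫ - deriv Φ ⟪x ω, θstar⟫ * ⟪x ω, θ⟫) μ :=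
    fun θ => (hΦ.continuous.comp_aestronglyMeasurable (hinner θ)).sub
      ((aestronglyMeasurable_deriv_comp_inner hx θstar).mul (hinner θ))
  have hF_int : Integrable (fun ω => Φ ⟪x ω, θ⟫ - deriv Φ ⟪x ω, θstar⟫ * ⟪x ω, θ⟫) μ := by
    obtain ⟨C, hC⟩ := IsCompact.exists_bound_of_continuousOn
      (isCompact_Icc (a := -(Lx * ‖θ‖)) (b := Lx * ‖θ‖)) hΦ.continuous.continuousOn
    refine Integrable.of_bound (hF_meas θ) (C + K * (Lx * ‖θ‖)) ?_
    filter_upwards [ae_abs_inner_le hxbd θ] with ω hω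
    calc ‖Φ ⟪x ω, θ⟫ - deriv Φ ⟪x ω, θstar⟫ * ⟪x ω, θ⟫‖
        ≤ ‖Φ ⟪x ω, θ⟫‖ + |deriv Φ ⟪x ω, θstar⟫| * |⟪x ω, θ⟫| := by
          rw [← abs_mul]; exact norm_sub_le _ _
      _ ≤ C + K * (Lx * ‖θ‖) :=
          add_le_add (hC _ (abs_le.mp hω)) (mul_le_mul (hΦ' _) hω (abs_nonneg _)
            ((abs_nonneg _).trans (hΦ' 0)))
  have hG_le : ∀ᵐ ω ∂μ, ∀ θ : E,
      ‖(deriv Φ ⟪x ω, θ⟫ - deriv Φ ⟪x ω, θstar⟫) • x ω‖ ≤ 2 * K * Lx := by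
    have hK : 0 ≤ K := (abs_nonneg _).trans (hΦ' 0)
    filter_upwards [hxbd] with ω hω θ
    exact (norm_deriv_sub_deriv_smul_le hΦ' _ _ _).trans (by gcongr)
  exact hasGradientAt_integral_of_dominated (2 * K * Lx) hF_meas hF_int
    (integrable_deriv_sub_deriv_smul hx hxbd hΦ' θstar θ).aestronglyMeasurable hG_le
    fun ω θ => hasGradientAt_comp_inner_sub_mul_inner (x ω) _ (hΦ _)

lemma inner_gradient_glmRisk (hx : AEStronglyMeasurable x μ) (hxbd : ∀ᵐ ω ∂μ, ‖x ω‖ ≤ Lx)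
    (hΦ : Differentiable ℝ Φ) (hΦ' : ∀ t, |deriv Φ t| ≤ K) (θstar θ v : E) :
    ⟪gradient (glmRisk μ x Φ θstar) θ, v⟫ =
      ∫ ω, (deriv Φ ⟪x ω, θ⟫ - deriv Φ ⟪x ω, θstar⟫) * ⟪x ω, v⟫ ∂μ := by
  rw [(hasGradientAt_glmRisk hx hxbd hΦ hΦ' θstar θ).gradient, real_inner_comm,
    ← integral_inner (integrable_deriv_sub_deriv_smul hx hxbd hΦ' θstar θ)]
  simp only [real_inner_smul_right, real_inner_comm]

lemma mul_integral_inner_sq_le_inner_gradient_glmRisk (hx : AEStronglyMeasurable x μ)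
    (hxbd : ∀ᵐ ω ∂μ, ‖x ω‖ ≤ Lx) (hΦ : ContDiff ℝ 2 Φ) (hΦ' : ∀ t, |deriv Φ t| ≤ K) {c r : ℝ}
    (hc : ∀ ξ, |ξ| ≤ Lx * r → c ≤ deriv (deriv Φ) ξ) {θstar θ : E} (hθ : ‖θ‖ ≤ r)
    (hθstar : ‖θstar‖ ≤ r) :
    c * ∫ ω, ⟪x ω, θ - θstar⟫ ^ 2 ∂μ ≤ ⟪gradient (glmRisk μ x Φ θstar) θ, θ - θstar⟫ := by
  have hΦ₁ : Differentiable ℝ Φ := hΦ.differentiable (by norm_num)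
  have hsq_int : Integrable (fun ω => ⟪x ω, θ - θstar⟫ ^ 2) μ := by
    refine Integrable.of_bound ((hx.inner aestronglyMeasurable_const).pow 2)
      ((Lx * ‖θ - θstar‖) ^ 2) ?_
    filter_upwards [ae_abs_inner_le hxbd (θ - θstar)] with ω hω
    rw [Real.norm_eq_abs, abs_pow]
    exact pow_le_pow_left₀ (abs_nonneg _) hω 2
  have hrhs_int : Integrable
      (fun ω => (deriv Φ ⟪x ω, θ⟫ - deriv Φ ⟪x ω, θstar⟫) * ⟪x ω, θ - θstar⟫) μ := by
    simpa only [real_inner_smul_left] using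
      (integrable_deriv_sub_deriv_smul hx hxbd hΦ' θstar θ).inner_const (𝕜 := ℝ) (θ - θstar)
  rw [inner_gradient_glmRisk hx hxbd hΦ₁ hΦ', ← integral_const_mul]
  refine integral_mono_ae (hsq_int.const_mul c) hrhs_int ?_
  filter_upwards [hxbd, ae_abs_inner_le hxbd θ, ae_abs_inner_le hxbd θstar]
    with ω hxω hθω hθstarω
  have hLx : 0 ≤ Lx := (norm_nonneg _).trans hxω
  rw [inner_sub_right]
  exact mul_sq_le_sub_mul_sub_of_le_deriv hΦ.differentiable_deriv_two hc
    (hθω.trans (by gcongr)) (hθstarω.trans (by gcongr))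

end Integral

theorem stmt_2_general {p : ℕ} {Ω : Type*} [MeasurableSpace Ω]
    (μ : Measure Ω) [IsProbabilityMeasure μ]
    (x : Ω → EuclideanSpace ℝ (Fin p)) (hxmeas : Measurable x)
    (Lx : ℝ) (hxbd : ∀ᵐ ω ∂μ, ‖x ω‖ ≤ Lx)
    (Φ : ℝ → ℝ) (hΦ : ContDiff ℝ 2 Φ)
    (KΦ' : ℝ)
    (hΦ' : ∀ t : ℝ, |deriv Φ t| ≤ KΦ')
    (hΦ''pos : ∀ t : ℝ, 0 < deriv (deriv Φ) t)
    (hΦ''even : ∀ t : ℝ, deriv (deriv Φ) (-t) = deriv (deriv Φ) t)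
    (hΦ''anti : AntitoneOn (deriv (deriv Φ)) (Set.Ici (0:ℝ)))
    (θstar : EuclideanSpace ℝ (Fin p))
    (R : EuclideanSpace ℝ (Fin p) → ℝ)
    (hR : ∀ θ, R θ = ∫ ω, (Φ ⟪x ω, θ⟫ - deriv Φ ⟪x ω, θstar⟫ * ⟪x ω, θ⟫) ∂μ)
    (lamMin : ℝ) (hlamMinPos : 0 < lamMin)
    (hlamMin : ∀ v : EuclideanSpace ℝ (Fin p), lamMin * ‖v‖ ^ 2 ≤ ∫ ω, ⟪x ω, v⟫ ^ 2 ∂μ) :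
    ∀ D : ℝ, 0 < D → D < ‖θstar‖ →
      (∀ θ : EuclideanSpace ℝ (Fin p), ‖θ‖ ≤ D →
        deriv (deriv Φ) (Lx * ‖θstar‖) * lamMin / 2 * (‖θstar‖ - D) ≤ ‖gradient R θ‖) ∧
      0 < deriv (deriv Φ) (Lx * ‖θstar‖) * lamMin / 2 * (‖θstar‖ - D) := by
  intro D _ hDlt
  obtain rfl : R = glmRisk μ x Φ θstar := funext hR
  set c := deriv (deriv Φ) (Lx * ‖θstar‖)
  have hpos : 0 < c * lamMin := mul_pos (hΦ''pos _) hlamMinPos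
  refine ⟨fun θ hθ => ?_, by nlinarith⟩
  have hmono := mul_integral_inner_sq_le_inner_gradient_glmRisk hxmeas.aestronglyMeasurable hxbd
    hΦ hΦ' (fun ξ hξ => hΦ''anti.apply_le_of_abs_le hΦ''even hξ) (hθ.trans hDlt.le) le_rfl
  have hgrad : c * lamMin * ‖θ - θstar‖ ≤ ‖gradient (glmRisk μ x Φ θstar) θ‖ := by
    refine mul_norm_le_norm_of_mul_sq_le_inner (le_trans ?_ hmono)
    rw [mul_assoc]
    exact mul_le_mul_of_nonneg_left (hlamMin _) (hΦ''pos _).le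
  have hdist : ‖θstar‖ - D ≤ ‖θ - θstar‖ := by
    linarith [norm_sub_norm_le θstar θ, norm_sub_rev θ θstar]
  calc c * lamMin / 2 * (‖θstar‖ - D) ≤ c * lamMin * ‖θ - θstar‖ := by nlinarith
    _ ≤ _ := hgrad

/-- Lower bound on the norm of the GLM risk gradient over an `ℓ₂`-ball of radius
`D < ‖θ*‖₂` (used in the proof of Theorem `ERM_GLM_UP_General`). Here `lamMin` plays
the role of `λ_min(Σ)`, characterized through the quadratic form `v ↦ E[⟨x, v⟩²]`;
positive definiteness of `Σ` is `0 < lamMin`. -/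
theorem stmt_2 {p : ℕ} {Ω : Type*} [MeasurableSpace Ω]
    (μ : Measure Ω) [IsProbabilityMeasure μ]
    (x : Ω → EuclideanSpace ℝ (Fin p)) (hxmeas : Measurable x)
    (Lx : ℝ) (hxbd : ∀ᵐ ω ∂μ, ‖x ω‖ ≤ Lx)
    (hEx : ∫ ω, x ω ∂μ = 0)
    (Φ : ℝ → ℝ) (hΦ : ContDiff ℝ 2 Φ)
    (KΦ' KΦ'' : ℝ)
    (hΦ' : ∀ t : ℝ, |deriv Φ t| ≤ KΦ')
    (hΦ''pos : ∀ t : ℝ, 0 < deriv (deriv Φ) t)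
    (hΦ''bd : ∀ t : ℝ, deriv (deriv Φ) t ≤ KΦ'')
    (hΦ''even : ∀ t : ℝ, deriv (deriv Φ) (-t) = deriv (deriv Φ) t)
    (hΦ''anti : AntitoneOn (deriv (deriv Φ)) (Set.Ici (0:ℝ)))
    (θstar : EuclideanSpace ℝ (Fin p)) (hθstar : θstar ≠ 0)
    (R : EuclideanSpace ℝ (Fin p) → ℝ)
    (hR : ∀ θ, R θ = ∫ ω, (Φ ⟪x ω, θ⟫ - deriv Φ ⟪x ω, θstar⟫ * ⟪x ω, θ⟫) ∂μ)
    (lamMin : ℝ) (hlamMinPos : 0 < lamMin)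
    (hlamMin : ∀ v : EuclideanSpace ℝ (Fin p), lamMin * ‖v‖ ^ 2 ≤ ∫ ω, ⟪x ω, v⟫ ^ 2 ∂μ) :
    ∀ D : ℝ, 0 < D → D < ‖θstar‖ →
      (∀ θ : EuclideanSpace ℝ (Fin p), ‖θ‖ ≤ D →
        deriv (deriv Φ) (Lx * ‖θstar‖) * lamMin / 2 * (‖θstar‖ - D) ≤ ‖gradient R θ‖) ∧
      0 < deriv (deriv Φ) (Lx * ‖θstar‖) * lamMin / 2 * (‖θstar‖ - D) :=
  stmt_2_general μ x hxmeas Lx hxbd Φ hΦ KΦ' hΦ' hΦ''pos hΦ''even hΦ''anti θstar R hR lamMin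
    hlamMinPos hlamMin
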